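/- Let F : ℝ³ → ℝ⁴ be the chart map of the cubic model of S³, defined by F(x) = (1, x)/√(1 + ‖x‖₂²) (the radial projection of the point (1,x) of the face w = 1 of the cube ∂[-1,1]⁴ onto the unit sphere S³). Then F is differentiable at every x ∈ ℝ³, and for every tangent vector v ∈ ℝ³, the Euclidean norm of the image of v under the derivative of F at x satisfies ‖DF(x)(v)‖₂² = ((1 + ‖x‖₂²)·‖v‖₂² − ⟨x, v⟩²) / (1 + ‖x‖₂²)², where ⟨·,·⟩ is the Euclidean inner product on ℝ³. -/

import Mathlib

/-- The chart map `F : ℝ³ → ℝ⁴` of the cubic model of `S³`: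
`F(x) = (1, x) / √(1 + ‖x‖₂²)`, the radial projection of the point `(1, x)` of the
face `w = 1` of the cube `∂[-1,1]⁴` onto the unit sphere `S³`. -/
noncomputable def chartMap (x : EuclideanSpace ℝ (Fin 3)) : EuclideanSpace ℝ (Fin 4) :=
  (Real.sqrt (1 + ‖x‖ ^ 2))⁻¹ •
    (EuclideanSpace.equiv (Fin 4) ℝ).symm (Fin.cons 1 ((EuclideanSpace.equiv (Fin 3) ℝ) x))

set_option maxHeartbeats 1000000

open scoped RealInnerProductSpace

noncomputable def embedLM : EuclideanSpace ℝ (Fin 3) →ₗ[ℝ] EuclideanSpace ℝ (Fin 4) where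
  toFun x := (EuclideanSpace.equiv (Fin 4) ℝ).symm (Fin.cons 0 ((EuclideanSpace.equiv (Fin 3) ℝ) x))
  map_add' x y := by ext i; induction i using Fin.cases <;> simp
  map_smul' c x := by ext i; induction i using Fin.cases <;> simp

noncomputable def embed : EuclideanSpace ℝ (Fin 3) →L[ℝ] EuclideanSpace ℝ (Fin 4) :=
  LinearMap.toContinuousLinearMap embedLM

noncomputable def cvec : EuclideanSpace ℝ (Fin 4) :=
  (EuclideanSpace.equiv (Fin 4) ℝ).symm (Fin.cons 1 0)

lemma inner_embed (u v : EuclideanSpace ℝ (Fin 3)) : ⟪embed u, embed v⟫ = ⟪u, v⟫ := by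
  simp [embed, embedLM, PiLp.inner_apply, Fin.sum_univ_succ, Fin.sum_univ_three]

lemma inner_cvec_embed (v : EuclideanSpace ℝ (Fin 3)) : ⟪cvec, embed v⟫ = 0 := by
  simp [embed, embedLM, cvec, PiLp.inner_apply, Fin.sum_univ_succ]

lemma inner_embed_cvec (v : EuclideanSpace ℝ (Fin 3)) : ⟪embed v, cvec⟫ = 0 := by
  simp [embed, embedLM, cvec, PiLp.inner_apply, Fin.sum_univ_succ]

lemma inner_cvec_cvec : ⟪cvec, cvec⟫ = (1 : ℝ) := by
  simp [cvec, PiLp.inner_apply, Fin.sum_univ_succ, EuclideanSpace.norm_eq]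


lemma chartMap_eq :
    chartMap = fun y => (Real.sqrt (1 + ‖y‖ ^ 2))⁻¹ • (cvec + embed y) := by
  funext y
  unfold chartMap
  congr 1
  ext i
  induction i using Fin.cases <;> simp [cvec, embed, embedLM]

/-- The chart map `F` is differentiable everywhere, and the Euclidean norm
of the image of a tangent vector `v` under its derivative satisfies
`‖DF(x)(v)‖₂² = ((1 + ‖x‖²)·‖v‖² − ⟨x,v⟩²) / (1 + ‖x‖²)²`. -/
theorem chartMap_fderiv_norm_sq (x : EuclideanSpace ℝ (Fin 3)) :
    DifferentiableAt ℝ chartMap x ∧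
    ∀ v : EuclideanSpace ℝ (Fin 3),
      ‖fderiv ℝ chartMap x v‖ ^ 2 =
        ((1 + ‖x‖ ^ 2) * ‖v‖ ^ 2 - (inner ℝ x v : ℝ) ^ 2) / (1 + ‖x‖ ^ 2) ^ 2 := by
  set n : ℝ := 1 + ‖x‖ ^ 2 with hn_def
  have hn : 0 < n := by positivity
  have hs0 : Real.sqrt n ≠ 0 := by positivity
  have hg : HasFDerivAt (fun y : EuclideanSpace ℝ (Fin 3) => 1 + ‖y‖ ^ 2)
      (2 • innerSL ℝ x) x :=
    ((hasStrictFDerivAt_norm_sq x).hasFDerivAt).const_add 1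
  have hsqrt : HasDerivAt Real.sqrt (1 / (2 * Real.sqrt n)) n :=
    Real.hasDerivAt_sqrt hn.ne'
  have hcomp : HasFDerivAt (fun y : EuclideanSpace ℝ (Fin 3) => Real.sqrt (1 + ‖y‖ ^ 2))
      ((1 / (2 * Real.sqrt n)) • (2 • innerSL ℝ x)) x :=
    hsqrt.comp_hasFDerivAt x hg
  have hφ : HasFDerivAt (fun y : EuclideanSpace ℝ (Fin 3) => (Real.sqrt (1 + ‖y‖ ^ 2))⁻¹)
      (-(Real.sqrt n ^ 2)⁻¹ • ((1 / (2 * Real.sqrt n)) • (2 • innerSL ℝ x))) x :=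
    (hasDerivAt_inv hs0).comp_hasFDerivAt x hcomp
  have hL : HasFDerivAt (fun y : EuclideanSpace ℝ (Fin 3) => cvec + embed y) (embed) x :=
    (embed.hasFDerivAt).const_add cvec
  have hF : HasFDerivAt chartMap
      ((Real.sqrt n)⁻¹ • embed +
        (-(Real.sqrt n ^ 2)⁻¹ • ((1 / (2 * Real.sqrt n)) • (2 • innerSL ℝ x))).smulRight
          (cvec + embed x)) x := by
    rw [chartMap_eq]
    exact hφ.smul hL
  refine ⟨hF.differentiableAt, fun v => ?_⟩
  rw [hF.fderiv]
  have hα : ∀ v : EuclideanSpace ℝ (Fin 3),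
      ((Real.sqrt n)⁻¹ • embed +
        (-(Real.sqrt n ^ 2)⁻¹ • ((1 / (2 * Real.sqrt n)) • (2 • innerSL ℝ x))).smulRight
          (cvec + embed x)) v
      = (-(Real.sqrt n ^ 2)⁻¹ * (1 / (2 * Real.sqrt n)) * (2 * ⟪x, v⟫)) • (cvec + embed x)
        + (Real.sqrt n)⁻¹ • embed v := by
    intro v
    simp only [ContinuousLinearMap.add_apply, ContinuousLinearMap.coe_smul', Pi.smul_apply,
      ContinuousLinearMap.smulRight_apply, ContinuousLinearMap.smul_apply, innerSL_apply_apply,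
      smul_smul, nsmul_eq_mul, Nat.cast_ofNat]
    rw [smul_eq_mul, add_comm, mul_assoc]
  rw [hα v]
  set α : ℝ := -(Real.sqrt n ^ 2)⁻¹ * (1 / (2 * Real.sqrt n)) * (2 * ⟪x, v⟫) with hαv
  set β : ℝ := (Real.sqrt n)⁻¹ with hβ
  have hnorm : ‖α • (cvec + embed x) + β • embed v‖ ^ 2
      = α ^ 2 * (1 + ‖x‖ ^ 2) + 2 * (α * β) * ⟪x, v⟫ + β ^ 2 * ‖v‖ ^ 2 := by
    have h1 : ⟪cvec + embed x, cvec + embed x⟫ = 1 + ‖x‖ ^ 2 := by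
      rw [inner_add_add_self, inner_cvec_cvec, inner_cvec_embed, inner_embed_cvec,
        inner_embed, real_inner_self_eq_norm_sq]
      ring
    have h2 : ⟪cvec + embed x, embed v⟫ = ⟪x, v⟫ := by
      rw [inner_add_left, inner_cvec_embed, inner_embed, zero_add]
    have h3 : ⟪embed v, embed v⟫ = ‖v‖ ^ 2 := by
      rw [inner_embed, real_inner_self_eq_norm_sq]
    have h2' : ⟪embed v, cvec + embed x⟫ = ⟪x, v⟫ := by rw [real_inner_comm]; exact h2
    rw [← real_inner_self_eq_norm_sq, inner_add_add_self]
    simp only [real_inner_smul_left, real_inner_smul_right, h1, h2, h2', h3]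
    ring
  have hs2 : Real.sqrt n ^ 2 = n := Real.sq_sqrt hn.le
  have key : ∀ s t vn N : ℝ, s ≠ 0 → s ^ 2 = N →
      (-(s ^ 2)⁻¹ * (1 / (2 * s)) * (2 * t)) ^ 2 * N +
        2 * (-(s ^ 2)⁻¹ * (1 / (2 * s)) * (2 * t) * s⁻¹) * t + (s⁻¹) ^ 2 * vn =
      (N * vn - t ^ 2) / N ^ 2 := by
    intro s t vn N hs hN
    subst hN
    field_simp
    ring
  rw [hnorm, hαv, hβ, ← hn_def]
  exact key _ _ _ _ hs0 hs2
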